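/- arXiv:2411.00176 — 2 statements merged into one kernel-verified Lean document; each statement's English description precedes it below -/
import Mathlib

section
/- Suppose the real number α satisfies |α − p/q| ≤ 1/q² for some integers p, q with q ≥ 1 and gcd(p,q)=1. Then for all positive integers H and N, the sum over k = 1 to H of min(N, 1/‖kα‖_T) is at most C·(HN/q + H·log q + N + q·log q) for an absolute constant C. -/
open Real

/-- Distance to the nearest integer. -/
noncomputable def dT (x : ℝ) : ℝ := |x - round x|

/-- `min(N, 1/x)`, interpreted as `N` when `x = 0`. -/
noncomputable def mterm (N x : ℝ) : ℝ := if x = 0 then N else min N (1 / x)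

/-!
Write `α = p / q + δ` and cut `1, …, H` into at most `H / q + 1` blocks of `q` consecutive
integers. In the block starting at `k₀`, `k α = k p / q + k₀ δ + (k - k₀) δ` and the last term is
at most `1 / q` in size. As `p` is coprime to `q`, the points `k p / q + k₀ δ` are a common shift
of the `q` fractions `r / q`, so they can be matched injectively with integers `z ∈ [-q, q]` such
that `‖k p / q + k₀ δ‖ ≥ (|z| - 1) / q`. Each term of the block is then at most `N` when `|z| ≤ 2`
and at most `3 q / |z|` otherwise, so a block contributes at most `5 N + 6 q (1 + log q)`.
-/

open Finset

lemma dT_le_dT_add_add_abs (x y : ℝ) : dT x ≤ dT (x + y) + |y| :=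
  calc dT x ≤ |x - round (x + y)| := round_le x _
    _ = |(x + y - round (x + y)) - y| := by ring_nf
    _ ≤ dT (x + y) + |y| := abs_sub _ _

lemma mterm_le_left (N x : ℝ) : mterm N x ≤ N := by
  unfold mterm
  split_ifs
  exacts [le_rfl, min_le_left _ _]

lemma mterm_nonneg {N x : ℝ} (hN : 0 ≤ N) (hx : 0 ≤ x) : 0 ≤ mterm N x := by
  unfold mterm
  split_ifs
  exacts [hN, le_min hN (one_div_nonneg.mpr hx)]

lemma mterm_le_one_div {N x y : ℝ} (hy : 0 < y) (hyx : y ≤ x) : mterm N x ≤ 1 / y := by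
  rw [mterm, if_neg (hy.trans_le hyx).ne']
  exact (min_le_right _ _).trans (one_div_le_one_div_of_le hy hyx)

/-- The bound for a single term of a block, indexed by the integer `w` the term is matched with. -/
noncomputable def majorant (N q : ℝ) (w : ℤ) : ℝ :=
  (if |w| ≤ 2 then N else 0) + 3 * q * |(w : ℝ)|⁻¹

lemma majorant_nonneg {N q : ℝ} (hN : 0 ≤ N) (hq : 0 ≤ q) (w : ℤ) : 0 ≤ majorant N q w := by
  unfold majorant
  split_ifs <;> positivity

lemma mterm_dT_add_le_majorant {N q x ε : ℝ} {w : ℤ} (hq : 0 < q)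
    (hw : |(w : ℝ)| - 1 ≤ q * dT x) (hε : |ε| ≤ 1 / q) :
    mterm N (dT (x + ε)) ≤ majorant N q w := by
  unfold majorant
  split_ifs with hw2
  · linarith [mterm_le_left N (dT (x + ε)), (by positivity : 0 ≤ 3 * q * |(w : ℝ)|⁻¹)]
  · have hw3 : (3 : ℝ) ≤ |(w : ℝ)| := by
      rw [← Int.cast_abs]
      exact_mod_cast (not_le.mp hw2 : 2 < |w|)
    have hqε : q * |ε| ≤ 1 := by rwa [le_div_iff₀' hq] at hε
    have hshift : |(w : ℝ)| / (3 * q) ≤ dT (x + ε) := by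
      rw [div_le_iff₀ (by positivity)]
      nlinarith [dT_le_dT_add_add_abs x ε]
    calc mterm N (dT (x + ε)) ≤ 1 / (|(w : ℝ)| / (3 * q)) :=
          mterm_le_one_div (by positivity) hshift
      _ = 0 + 3 * q * |(w : ℝ)|⁻¹ := by field_simp; ring

lemma sum_Icc_abs_inv (n : ℕ) : ∑ w ∈ Icc (-n : ℤ) n, |(w : ℝ)|⁻¹ = 2 * harmonic n := by
  induction n with
  | zero => simp
  | succ n ih =>
    have hIcc : Icc (-(n + 1 : ℕ) : ℤ) (n + 1 : ℕ) =
        insert (-(n + 1 : ℤ)) (insert (n + 1 : ℤ) (Icc (-n : ℤ) n)) := by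
      ext w
      simp only [mem_Icc, mem_insert]
      omega
    rw [hIcc, sum_insert (by simp only [mem_insert, mem_Icc]; omega),
      sum_insert (by simp only [mem_Icc]; omega), ih, harmonic_succ]
    push_cast
    rw [abs_neg, abs_of_pos (by positivity)]
    ring

lemma sum_Icc_majorant_le {N : ℝ} (hN : 0 ≤ N) (q : ℕ) :
    ∑ w ∈ Icc (-q : ℤ) q, majorant N q w ≤ 5 * N + 6 * q * (1 + log q) := by
  have hsmall : #{w ∈ Icc (-q : ℤ) q | |w| ≤ 2} ≤ 5 :=
    (card_le_card fun w hw => mem_Icc.mpr (abs_le.mp (mem_filter.mp hw).2)).trans_eq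
      (by rfl : #(Icc (-2 : ℤ) 2) = 5)
  have hharm : (harmonic q : ℝ) ≤ 1 + log q := by exact_mod_cast harmonic_le_one_add_log q
  simp only [majorant, sum_add_distrib, ← mul_sum, sum_ite, sum_const_zero, add_zero, sum_const,
    nsmul_eq_mul, sum_Icc_abs_inv]
  have : (#{w ∈ Icc (-q : ℤ) q | |w| ≤ 2} : ℝ) ≤ 5 := by exact_mod_cast hsmall
  nlinarith [(by positivity : (0 : ℝ) ≤ q)]

lemma exists_modEq_abs_sub_one_le_dT {q : ℕ} (hq : 0 < q) (θ : ℝ) :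
    ∃ c : ℤ, ∀ a : ℤ, ∃ z : ℤ,
      z ≡ a + c [ZMOD q] ∧ |z| ≤ q ∧ |(z : ℝ)| - 1 ≤ q * dT (a / q + θ) := by
  refine ⟨⌊q * θ⌋, fun a => ⟨a + ⌊q * θ⌋ - q * round (a / q + θ),
    Int.modEq_iff_dvd.mpr ⟨round (a / q + θ), by ring⟩, ?_⟩⟩
  set z : ℤ := a + ⌊q * θ⌋ - q * round (a / q + θ)
  set c : ℝ := Int.fract (q * θ)
  have hq' : (0 : ℝ) < q := by exact_mod_cast hq
  have hz : q * dT (a / q + θ) = |z + c| := by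
    have : (z : ℝ) + c = q * (a / q + θ - round (a / q + θ)) := by
      simp only [z, c, Int.fract]
      push_cast
      field_simp
      ring
    rw [this, abs_mul, abs_of_pos hq', dT]
  have hround : q * dT (a / q + θ) ≤ q / 2 :=
    calc q * dT (a / q + θ) ≤ q * (1 / 2) := by gcongr; exact abs_sub_round _
      _ = q / 2 := by ring
  have habs : |(z : ℝ)| ≤ q * dT (a / q + θ) + c := by
    have := abs_sub ((z : ℝ) + c) c
    rwa [add_sub_cancel_right, abs_of_nonneg (Int.fract_nonneg (q * θ)), ← hz] at this
  have hc : c < 1 := Int.fract_lt_one _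
  refine ⟨?_, by linarith⟩
  have : |(z : ℝ)| < q + 1 := by linarith
  rw [← Int.cast_abs] at this
  exact Int.lt_add_one_iff.mp (by exact_mod_cast this)

lemma eq_of_mul_modEq_mul {k l p q : ℤ} (hpq : IsCoprime p q) (h : k * p ≡ l * p [ZMOD q])
    (hkl : |k - l| < q) : k = l := by
  have hdvd : q ∣ (k - l) * p := by
    rw [sub_mul]
    exact Int.ModEq.dvd h.symm
  exact sub_eq_zero.mp (Int.eq_zero_of_abs_lt_dvd (hpq.symm.dvd_of_dvd_mul_right hdvd) hkl)

lemma sum_Ioc_mterm_dT_le {p : ℤ} {q : ℕ} (hq : 0 < q) (hpq : IsCoprime p q) {δ : ℝ}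
    (hδ : |δ| ≤ 1 / (q : ℝ) ^ 2) {N : ℝ} (hN : 0 ≤ N) (k₀ : ℕ) :
    ∑ k ∈ Ioc k₀ (k₀ + q), mterm N (dT (k * (p / q + δ))) ≤ 5 * N + 6 * q * (1 + log q) := by
  have hq' : (0 : ℝ) < q := by exact_mod_cast hq
  obtain ⟨c, hc⟩ := exists_modEq_abs_sub_one_le_dT hq (k₀ * δ)
  choose z hz_modEq hz_le hz_dT using fun k : ℕ => hc (k * p)
  have hterm : ∀ k ∈ Ioc k₀ (k₀ + q), mterm N (dT (k * (p / q + δ))) ≤ majorant N q (z k) := by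
    intro k hk
    obtain ⟨hk₀, hkq⟩ := mem_Ioc.mp hk
    -- within the block, `k * δ` moves away from `k₀ * δ` by at most `q * |δ| ≤ 1 / q`
    have hshift : |((k : ℝ) - k₀) * δ| ≤ 1 / q := by
      have : |(k : ℝ) - k₀| ≤ q := by
        rw [abs_of_nonneg (by simp [hk₀.le])]
        linarith [(by exact_mod_cast hkq : (k : ℝ) ≤ k₀ + q)]
      calc |((k : ℝ) - k₀) * δ| ≤ q * (1 / (q : ℝ) ^ 2) := by
            rw [abs_mul]; gcongr
        _ = 1 / q := by field_simp
    have hsplit : (k : ℝ) * (p / q + δ) = ((k * p : ℤ) : ℝ) / q + k₀ * δ + (k - k₀) * δ := by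
      push_cast
      ring
    rw [hsplit]
    exact mterm_dT_add_le_majorant hq' (hz_dT k) hshift
  have hinj : Set.InjOn z (Ioc k₀ (k₀ + q)) := by
    intro k hk l hl hkl
    have hk' := mem_Ioc.mp hk
    have hl' := mem_Ioc.mp hl
    have : (k : ℤ) * p ≡ l * p [ZMOD q] :=
      Int.ModEq.add_right_cancel' c ((hz_modEq k).symm.trans (hkl ▸ hz_modEq l))
    exact_mod_cast eq_of_mul_modEq_mul hpq this (abs_sub_lt_iff.mpr ⟨by omega, by omega⟩)
  calc ∑ k ∈ Ioc k₀ (k₀ + q), mterm N (dT (k * (p / q + δ)))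
      ≤ ∑ k ∈ Ioc k₀ (k₀ + q), majorant N q (z k) := sum_le_sum hterm
    _ = ∑ w ∈ (Ioc k₀ (k₀ + q)).image z, majorant N q w := (sum_image hinj).symm
    _ ≤ ∑ w ∈ Icc (-q : ℤ) q, majorant N q w :=
        sum_le_sum_of_subset_of_nonneg
          (image_subset_iff.mpr fun k _ => mem_Icc.mpr (abs_le.mp (hz_le k)))
          fun w _ _ => majorant_nonneg hN hq'.le w
    _ ≤ 5 * N + 6 * q * (1 + log q) := sum_Icc_majorant_le hN q

lemma sum_Ioc_le_of_forall_block_le (f : ℕ → ℝ) {q : ℕ} {B : ℝ}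
    (hblock : ∀ j : ℕ, ∑ k ∈ Ioc (j * q) (j * q + q), f k ≤ B) (J : ℕ) :
    ∑ k ∈ Ioc 0 (J * q), f k ≤ J * B := by
  induction J with
  | zero => simp
  | succ J ih =>
    rw [add_one_mul, ← sum_Ioc_consecutive _ (Nat.zero_le _) (Nat.le_add_right _ _)]
    push_cast
    linarith [hblock J]

lemma div_add_one_mul_le {H N : ℝ} (hH : 0 ≤ H) (hN : 1 ≤ N) {q : ℕ} (hq : 1 ≤ q) :
    (H / q + 1) * (5 * N + 6 * q * (1 + log q)) ≤
      17 * (H * N / q + H * log q + N + q * log q) := by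
  have hq' : (1 : ℝ) ≤ q := by exact_mod_cast hq
  have hHq : H / q * q = H := div_mul_cancel₀ _ (by positivity)
  have hHq₀ : 0 ≤ H / q := by positivity
  have hL : 0 ≤ log q := log_nonneg hq'
  rw [mul_div_right_comm]
  -- `log q ≥ 1` once `q ≥ 3`; for `q ≤ 2` the terms `H` and `q` are absorbed by `H N / q` and `N`
  rcases le_or_gt q 2 with hq2 | hq3
  · have hq2' : (q : ℝ) ≤ 2 := by exact_mod_cast hq2
    have : H ≤ 2 * (H / q) := by nlinarith
    nlinarith
  · have hq3' : (3 : ℝ) ≤ q := by exact_mod_cast hq3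
    have hL1 : 1 ≤ log q := by
      rw [le_log_iff_exp_le (by positivity)]
      linarith [exp_one_lt_three]
    nlinarith

theorem stmt3 :
    ∃ C : ℝ, 0 < C ∧ ∀ (α : ℝ) (p : ℤ) (q : ℕ), 1 ≤ q → Int.gcd p q = 1 →
      |α - (p : ℝ) / q| ≤ 1 / (q : ℝ) ^ 2 →
      ∀ H N : ℕ, 0 < H → 0 < N →
        ∑ k ∈ Finset.Icc 1 H, mterm N (dT ((k : ℝ) * α)) ≤
          C * ((H : ℝ) * N / q + H * Real.log q + N + q * Real.log q) := by
  refine ⟨17, by norm_num, fun α p q hq hpq hα H N _ hN => ?_⟩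
  obtain ⟨δ, rfl, hδ⟩ : ∃ δ : ℝ, α = p / q + δ ∧ |δ| ≤ 1 / (q : ℝ) ^ 2 :=
    ⟨α - p / q, by ring, hα⟩
  have hHJ : H ≤ (H / q + 1) * q := add_one_mul (H / q) q ▸ (Nat.lt_div_mul_add hq).le
  have hJ : ((H / q + 1 : ℕ) : ℝ) ≤ H / q + 1 := by
    push_cast
    linarith [(Nat.cast_div_le : ((H / q : ℕ) : ℝ) ≤ H / q)]
  calc ∑ k ∈ Icc 1 H, mterm N (dT (k * (p / q + δ)))
      ≤ ∑ k ∈ Ioc 0 ((H / q + 1) * q), mterm N (dT (k * (p / q + δ))) :=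
        sum_le_sum_of_subset_of_nonneg
          (fun k hk => mem_Ioc.mpr ⟨(mem_Icc.mp hk).1, (mem_Icc.mp hk).2.trans hHJ⟩)
          fun k _ _ => mterm_nonneg N.cast_nonneg (abs_nonneg _)
    _ ≤ ((H / q + 1 : ℕ) : ℝ) * (5 * N + 6 * q * (1 + log q)) :=
        sum_Ioc_le_of_forall_block_le _ (fun j => sum_Ioc_mterm_dT_le hq
          (Int.isCoprime_iff_gcd_eq_one.mpr hpq) hδ N.cast_nonneg (j * q)) _
    _ ≤ (H / q + 1) * (5 * N + 6 * q * (1 + log q)) := by gcongr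
    _ ≤ 17 * ((H : ℝ) * N / q + H * log q + N + q * log q) :=
        div_add_one_mul_le H.cast_nonneg (by exact_mod_cast hN) hq
end

section
/- Let x_1, …, x_N be points in the b-dimensional torus T^b, let ε > 0, and R = ⌊ε^{-1}/10⌋ ≥ 1. Let χ_ε denote the indicator of the set {x ∈ T^b : ‖x‖_{T^b} < ε}, where ‖x‖_{T^b} = max_j ‖x_j‖_T. Then ∑_{n=1}^N χ_ε(x_n) ≤ C(b)·R^{-b}·∑_{k ∈ Z^b, ‖k‖_∞ < R} |∑_{n=1}^N e^{2πi⟨k, x_n⟩}|, where C(b) depends only on b. -/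
/-!
Put `T_n = ∏_j ∑_{0 ≤ m < R} e(m x_{n,j}) = ∑_{k ∈ [0,R)^b} e(⟨k, x_n⟩)`. When `‖x_n‖ < ε ≤ 1/(10R)`
every term of each Dirichlet sum has real part at least `1/2`, so `|T_n| ≥ (R/2)^b`. Hence the
number of such points is at most `(R/2)^{-2b} ∑_n |T_n|^2`, and expanding the square,
`∑_n |T_n|^2 = ∑_{k, k' ∈ [0,R)^b} S(k - k')` with `S(k) = ∑_n e(⟨k, x_n⟩)`. Each difference lies in
`(-R, R)^b` and arises from at most `R^b` pairs, which gives the bound with `C(b) = 4^b`.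
-/

open Real

open Finset Fintype

noncomputable def expTwoPiI (t : ℝ) : ℂ := Complex.exp (2 * π * Complex.I * t)

lemma re_expTwoPiI (t : ℝ) : (expTwoPiI t).re = cos (2 * π * t) := by
  have h : 2 * (π : ℂ) * Complex.I * t = ((2 * π * t : ℝ) : ℂ) * Complex.I := by push_cast; ring
  rw [expTwoPiI, h, Complex.exp_ofReal_mul_I_re]

lemma expTwoPiI_mul_conj (a c : ℝ) :
    expTwoPiI a * starRingEnd ℂ (expTwoPiI c) = expTwoPiI (a - c) := by
  rw [expTwoPiI, expTwoPiI, expTwoPiI, ← Complex.exp_conj, ← Complex.exp_add]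
  simp only [map_mul, Complex.conj_I, Complex.conj_ofReal, map_ofNat]
  push_cast
  ring_nf

lemma expTwoPiI_sum {ι : Type*} (s : Finset ι) (f : ι → ℝ) :
    expTwoPiI (∑ j ∈ s, f j) = ∏ j ∈ s, expTwoPiI (f j) := by
  simp only [expTwoPiI, Complex.ofReal_sum, Finset.mul_sum, Complex.exp_sum]

lemma half_le_re_expTwoPiI_int_mul {m : ℤ} {z : ℝ} (h : |(m : ℝ)| * dT z ≤ 1 / 6) :
    1 / 2 ≤ (expTwoPiI (m * z)).re := by
  have hshift : 2 * π * (m * z) = 2 * π * (m * (z - round z)) + (m * round z : ℤ) * (2 * π) := by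
    push_cast; ring
  rw [re_expTwoPiI, hshift, cos_add_int_mul_two_pi, ← cos_abs, ← cos_pi_div_three]
  refine cos_le_cos_of_nonneg_of_le_pi (abs_nonneg _) (by linarith [pi_pos]) ?_
  calc |2 * π * (m * (z - round z))| = 2 * π * (|(m : ℝ)| * dT z) := by
        rw [dT, abs_mul, abs_mul, abs_mul, abs_two, abs_of_pos pi_pos]
    _ ≤ 2 * π * (1 / 6) := by gcongr
    _ = π / 3 := by ring

lemma half_le_norm_sum_expTwoPiI {R : ℕ} {z : ℝ} (h : R * dT z ≤ 1 / 6) :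
    (R : ℝ) / 2 ≤ ‖∑ m ∈ Ico (0 : ℤ) R, expTwoPiI (m * z)‖ := by
  have hterm : ∀ m ∈ Ico (0 : ℤ) R, (1 / 2 : ℝ) ≤ (expTwoPiI (m * z)).re := by
    intro m hm
    obtain ⟨hm0, hmR⟩ := mem_Ico.mp hm
    have hmR' : |(m : ℝ)| ≤ R := by
      rw [abs_of_nonneg (by exact_mod_cast hm0)]; exact_mod_cast hmR.le
    exact half_le_re_expTwoPiI_int_mul
      ((mul_le_mul_of_nonneg_right hmR' (abs_nonneg _)).trans h)
  calc (R : ℝ) / 2 = ∑ m ∈ Ico (0 : ℤ) R, (1 / 2 : ℝ) := by simp; ring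
    _ ≤ ∑ m ∈ Ico (0 : ℤ) R, (expTwoPiI (m * z)).re := sum_le_sum hterm
    _ = (∑ m ∈ Ico (0 : ℤ) R, expTwoPiI (m * z)).re := (Complex.re_sum _ _).symm
    _ ≤ _ := Complex.re_le_norm _

section Frequencies

variable {ι α : Type*} [Fintype ι] [Fintype α]

noncomputable def expSum (x : α → ι → ℝ) (k : ι → ℤ) : ℂ := ∑ n, expTwoPiI (∑ j, (k j : ℝ) * x n j)

lemma sum_norm_sq_eq_re_sum_expSum (P : Finset (ι → ℤ)) (x : α → ι → ℝ) :
    ∑ n, ‖∑ k ∈ P, expTwoPiI (∑ j, (k j : ℝ) * x n j)‖ ^ 2 =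
      (∑ p ∈ P ×ˢ P, expSum x (p.1 - p.2)).re := by
  have hsq (z : ℂ) : ‖z‖ ^ 2 = (z * starRingEnd ℂ z).re := by
    rw [Complex.mul_conj, Complex.ofReal_re, Complex.normSq_eq_norm_sq]
  simp only [hsq, ← Complex.re_sum, expSum]
  congr 1
  rw [Finset.sum_comm]
  refine sum_congr rfl fun n _ => ?_
  rw [map_sum, Finset.sum_mul_sum, ← sum_product']
  refine sum_congr rfl fun p _ => ?_
  rw [expTwoPiI_mul_conj, ← sum_sub_distrib]
  simp only [Pi.sub_apply, Int.cast_sub, sub_mul]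

variable [DecidableEq ι]

lemma prod_sum_expTwoPiI (s : ι → Finset ℤ) (y : ι → ℝ) :
    ∏ j, ∑ m ∈ s j, expTwoPiI (m * y j) =
      ∑ k ∈ piFinset s, expTwoPiI (∑ j, (k j : ℝ) * y j) := by
  simp only [prod_univ_sum, expTwoPiI_sum]

lemma pow_le_norm_sum_expTwoPiI {R : ℕ} {y : ι → ℝ} (hy : ∀ j, R * dT (y j) ≤ 1 / 6) :
    ((R : ℝ) / 2) ^ card ι ≤
      ‖∑ k ∈ piFinset fun _ : ι => Ico (0 : ℤ) R, expTwoPiI (∑ j, (k j : ℝ) * y j)‖ := by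
  rw [← prod_sum_expTwoPiI, norm_prod, ← card_univ, ← prod_const]
  exact prod_le_prod (fun _ _ => by positivity) fun j _ => half_le_norm_sum_expTwoPiI (hy j)

lemma card_piFinset_Ico (R : ℕ) : #(piFinset fun _ : ι => Ico (0 : ℤ) R) = R ^ card ι := by
  simp [card_piFinset]

lemma sub_mem_piFinset_Ioo {R : ℤ} {p q : ι → ℤ} (hp : p ∈ piFinset fun _ => Ico 0 R)
    (hq : q ∈ piFinset fun _ => Ico 0 R) : p - q ∈ piFinset fun _ => Ioo (-R) R := by
  rw [mem_piFinset] at hp hq ⊢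
  intro j
  have := mem_Ico.mp (hp j)
  have := mem_Ico.mp (hq j)
  rw [Pi.sub_apply, mem_Ioo]
  omega

lemma sum_product_sub_le_card_mul_sum {G : Type*} [AddGroup G] [DecidableEq G]
    {P B : Finset G} (hPB : ∀ p ∈ P, ∀ q ∈ P, p - q ∈ B) {f : G → ℝ} (hf : 0 ≤ f) :
    ∑ p ∈ P ×ˢ P, f (p.1 - p.2) ≤ #P * ∑ k ∈ B, f k := by
  rw [sum_product, ← nsmul_eq_mul, ← sum_const]
  refine sum_le_sum fun p hp => ?_
  rw [← sum_image fun q _ r _ h => sub_right_injective h]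
  exact sum_le_sum_of_subset_of_nonneg
    (image_subset_iff.mpr fun q hq => hPB p hp q hq) fun k _ _ => hf k

lemma floor_inv_div_ten_mul_le {ε : ℝ} (hε : 0 < ε) : (⌊ε⁻¹ / 10⌋ : ℝ) * ε ≤ 1 / 10 := by
  have h := Int.floor_le (ε⁻¹ / 10)
  calc (⌊ε⁻¹ / 10⌋ : ℝ) * ε ≤ ε⁻¹ / 10 * ε := by gcongr
    _ = 1 / 10 := by field_simp

lemma sum_indicator_mul_le_sum_norm_expSum {R : ℕ} {ε : ℝ} (hRε : R * ε ≤ 1 / 6)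
    (x : α → ι → ℝ) [∀ n, Decidable (∀ j, dT (x n j) < ε)] :
    (∑ n, if ∀ j, dT (x n j) < ε then (1 : ℝ) else 0) * (((R : ℝ) / 2) ^ card ι) ^ 2 ≤
      (R : ℝ) ^ card ι * ∑ k ∈ piFinset fun _ : ι => Ioo (-(R : ℤ)) R, ‖expSum x k‖ := by
  set P := piFinset fun _ : ι => Ico (0 : ℤ) R
  have hnear (n : α) : (if ∀ j, dT (x n j) < ε then (1 : ℝ) else 0) * (((R : ℝ) / 2) ^ card ι) ^ 2
      ≤ ‖∑ k ∈ P, expTwoPiI (∑ j, (k j : ℝ) * x n j)‖ ^ 2 := by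
    split_ifs with h
    · rw [one_mul]
      exact pow_le_pow_left₀ (by positivity) (pow_le_norm_sum_expTwoPiI fun j =>
        (mul_le_mul_of_nonneg_left (h j).le R.cast_nonneg).trans hRε) 2
    · rw [zero_mul]; positivity
  calc _ ≤ ∑ n, ‖∑ k ∈ P, expTwoPiI (∑ j, (k j : ℝ) * x n j)‖ ^ 2 := by
        rw [sum_mul]; exact sum_le_sum fun n _ => hnear n
    _ = (∑ p ∈ P ×ˢ P, expSum x (p.1 - p.2)).re := sum_norm_sq_eq_re_sum_expSum P x
    _ ≤ ∑ p ∈ P ×ˢ P, ‖expSum x (p.1 - p.2)‖ :=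
        (Complex.re_sum _ _).trans_le (sum_le_sum fun p _ => Complex.re_le_norm _)
    _ ≤ #P * ∑ k ∈ piFinset fun _ : ι => Ioo (-(R : ℤ)) R, ‖expSum x k‖ :=
        sum_product_sub_le_card_mul_sum (fun p hp q hq => sub_mem_piFinset_Ioo hp hq)
          fun k => norm_nonneg _
    _ = _ := by rw [card_piFinset_Ico]; push_cast; rfl

end Frequencies

theorem stmt6_general (b : ℕ) :
    ∃ C : ℝ, 0 < C ∧ ∀ (N : ℕ) (x : Fin N → Fin b → ℝ) (ε : ℝ), 0 < ε →
      ∀ R : ℤ, R = ⌊ε⁻¹ / 10⌋ → 1 ≤ R →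
        (∑ n : Fin N, (if ∀ j, dT (x n j) < ε then (1 : ℝ) else 0)) ≤
          C * ((R : ℝ) ^ b)⁻¹ *
            ∑ k ∈ Fintype.piFinset (fun _ : Fin b => Finset.Ioo (-R) R),
              ‖∑ n : Fin N,
                Complex.exp (2 * π * Complex.I * ((∑ j, (k j : ℝ) * x n j : ℝ) : ℂ))‖ := by
  refine ⟨4 ^ b, by positivity, fun N x ε hε R hR hR1 => ?_⟩
  have hRε : (R : ℝ) * ε ≤ 1 / 10 := hR ▸ floor_inv_div_ten_mul_le hε
  lift R to ℕ using by omega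
  change _ ≤ _ * ∑ k ∈ piFinset fun _ : Fin b => Ioo (-(R : ℤ)) R, ‖expSum x k‖
  push_cast at hRε ⊢
  have hR0 : (0 : ℝ) < R := by exact_mod_cast hR1
  have key := sum_indicator_mul_le_sum_norm_expSum (R := R) (ε := ε) (by linarith) x
  rw [Fintype.card_fin] at key
  rw [show (4 : ℝ) ^ b * ((R : ℝ) ^ b)⁻¹ = (R : ℝ) ^ b / (((R : ℝ) / 2) ^ b) ^ 2 by
    rw [show (4 : ℝ) ^ b = (2 ^ b) ^ 2 by rw [← pow_mul, mul_comm, pow_mul]; norm_num, div_pow]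
    field_simp, div_mul_eq_mul_div]
  exact (le_div_iff₀ (by positivity)).mpr key

theorem stmt6 (b : ℕ) (hb : 0 < b) :
    ∃ C : ℝ, 0 < C ∧ ∀ (N : ℕ) (x : Fin N → Fin b → ℝ) (ε : ℝ), 0 < ε →
      ∀ R : ℤ, R = ⌊ε⁻¹ / 10⌋ → 1 ≤ R →
        (∑ n : Fin N, (if ∀ j, dT (x n j) < ε then (1 : ℝ) else 0)) ≤
          C * ((R : ℝ) ^ b)⁻¹ *
            ∑ k ∈ Fintype.piFinset (fun _ : Fin b => Finset.Ioo (-R) R),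
              ‖∑ n : Fin N,
                Complex.exp (2 * π * Complex.I * ((∑ j, (k j : ℝ) * x n j : ℝ) : ℂ))‖ :=
  stmt6_general b
end
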